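/- Let T be a hub-tree decomposition of a directed graph H⃗, let B be a node of T with children B₁,...,B_l, and fix a homomorphism φ_B from H⃗(B) to G⃗. Then the set of homomorphisms from H⃗(down(B)) to G⃗ that respect φ_B is in bijection with the product over i = 1,...,l of the sets of homomorphisms from H⃗(down(B_i)) to G⃗ that respect φ_B. Consequently, ext(H⃗(down(B)), G⃗, φ_B) = ∏_{i=1}^{l} ext(H⃗(down(B_i)), G⃗, φ_B). -/

import Mathlib

/-!
A homomorphism on `H⃗(down(B))` extending `φ_B` is determined by its restrictions to the
pieces `H⃗(down(c))`, `c` a child of `B`. Conversely such restrictions glue: every piece is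
closed under out-edges, and two pieces meet only inside `H⃗(B)`, where all of them agree with
`φ_B`. The latter holds because in a tree the path between nodes below two distinct children
of `B` passes through `B`, so the decomposition axiom applies.
-/

variable {VH VG ι : Type*}

/-- The set of vertices reachable from `v` by a directed path. -/
def Reach (D : VH → VH → Prop) (v : VH) : Set VH := {w | Relation.ReflTransGen D v w}

/-- The set of vertices reachable from some vertex of `A`. -/
def ReachS (D : VH → VH → Prop) (A : Set VH) : Set VH := ⋃ s ∈ A, Reach D s

/-- `S` is a hubset of the directed graph `D`. -/
def IsHubset (D : VH → VH → Prop) (S : Set VH) : Prop :=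
  (∀ s ∈ S, ∀ s' ∈ S, s ≠ s' → ¬ Relation.TransGen D s s') ∧
  (∀ v, v ∉ S → ∃ s ∈ S, v ∈ Reach D s)

/-- A hub-tree decomposition of a directed graph `D` with hubset `S`, with nodes
indexed by `ι`. -/
structure HubTreeDecomp (D : VH → VH → Prop) (S : Set VH) (ι : Type*) where
  T : SimpleGraph ι
  tree : T.IsTree
  bag : ι → Set VH
  bag_sub : ∀ i, bag i ⊆ S
  bag_cover : ∀ s ∈ S, ∃ i, s ∈ bag i
  decomp : ∀ (b b₁ b₂ : ι) (p : T.Walk b₁ b₂), p.IsPath → b ∈ p.support →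
    ReachS D (bag b₁) ∩ ReachS D (bag b₂) ⊆ ReachS D (bag b)

/-- `i` lies in the subtree rooted at... i.e. `i` is on the unique path from the root `r`
to `j` (so `j` is a descendant of `i` in the tree rooted at `r`). -/
def InSubtree (T : SimpleGraph ι) (r i j : ι) : Prop :=
  ∀ p : T.Walk r j, p.IsPath → i ∈ p.support

/-- The union of the reachability sets of the bags in the subtree of `B`
(with respect to the root `r`): the vertex set of `H⃗(down(B))`. -/
def downReach (D : VH → VH → Prop) {S : Set VH}
    (𝒯 : HubTreeDecomp D S ι) (r B : ι) : Set VH :=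
  ⋃ j ∈ {j | InSubtree 𝒯.T r B j}, ReachS D (𝒯.bag j)

/-- The homomorphisms from the subgraph of `D` induced on `U` to `Dg` that respect the
partial homomorphism `φB` defined on `A` (they agree with `φB` wherever both are
defined). -/
def HomExt (D : VH → VH → Prop) (Dg : VG → VG → Prop) (U A : Set VH) (φB : A → VG) :
    Type _ :=
  {φ : U → VG //
    (∀ u v : U, D (u : VH) (v : VH) → Dg (φ u) (φ v)) ∧
    ∀ (u : U) (h : (u : VH) ∈ A), φ u = φB ⟨u, h⟩}

def IsForwardClosed (D : VH → VH → Prop) (U : Set VH) : Prop :=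
  ∀ ⦃x y⦄, x ∈ U → D x y → y ∈ U

namespace HomExt

variable {D : VH → VH → Prop} {Dg : VG → VG → Prop} {A U : Set VH} {φ : A → VG}
  {κ : Type*} {V : κ → Set VH}

def restrict {W : Set VH} (h : W ⊆ U) (f : HomExt D Dg U A φ) : HomExt D Dg W A φ :=
  ⟨fun x => f.1 ⟨x, h x.2⟩, fun _ _ huv => f.2.1 _ _ huv, fun _ hu => f.2.2 _ hu⟩

open Classical in
noncomputable def glueFun (hcover : U ⊆ A ∪ ⋃ c, V c) (f : ∀ c, HomExt D Dg (V c) A φ)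
    (x : U) : VG :=
  if hx : (x : VH) ∈ A then φ ⟨x, hx⟩
  else
    have hx' := Set.mem_iUnion.1 ((hcover x.2).resolve_left hx)
    (f hx'.choose).1 ⟨x, hx'.choose_spec⟩

section Glue

variable {hcover : U ⊆ A ∪ ⋃ c, V c} (f : ∀ c, HomExt D Dg (V c) A φ)

theorem glueFun_of_mem_left {x : U} (hx : (x : VH) ∈ A) : glueFun hcover f x = φ ⟨x, hx⟩ :=
  dif_pos hx

theorem glueFun_of_mem (hdisj : Pairwise fun c c' => V c ∩ V c' ⊆ A) {x : U} {c : κ}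
    (hc : (x : VH) ∈ V c) : glueFun hcover f x = (f c).1 ⟨x, hc⟩ := by
  by_cases hx : (x : VH) ∈ A
  · rw [glueFun_of_mem_left f hx, (f c).2.2 ⟨x, hc⟩ hx]
  · have key : ∀ c₀ (h₀ : (x : VH) ∈ V c₀), c₀ = c → (f c₀).1 ⟨x, h₀⟩ = (f c).1 ⟨x, hc⟩ := by
      rintro _ _ rfl; rfl
    have hx' := Set.mem_iUnion.1 ((hcover x.2).resolve_left hx)
    rw [glueFun, dif_neg hx]
    exact key _ hx'.choose_spec (by_contra fun hne => hx (hdisj hne ⟨hx'.choose_spec, hc⟩))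

theorem glueFun_map_rel (hA : IsForwardClosed D A) (hV : ∀ c, IsForwardClosed D (V c))
    (hφ : ∀ u v : A, D u v → Dg (φ u) (φ v)) (hdisj : Pairwise fun c c' => V c ∩ V c' ⊆ A)
    (u v : U) (huv : D u v) : Dg (glueFun hcover f u) (glueFun hcover f v) := by
  by_cases hu : (u : VH) ∈ A
  · have hv : (v : VH) ∈ A := hA hu huv
    rw [glueFun_of_mem_left f hu, glueFun_of_mem_left f hv]
    exact hφ _ _ huv
  · obtain ⟨c, hc⟩ := Set.mem_iUnion.1 ((hcover u.2).resolve_left hu)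
    have hv : (v : VH) ∈ V c := hV c hc huv
    rw [glueFun_of_mem f hdisj hc, glueFun_of_mem f hdisj hv]
    exact (f c).2.1 _ _ huv

end Glue

noncomputable def equivPi (hA : IsForwardClosed D A) (hV : ∀ c, IsForwardClosed D (V c))
    (hφ : ∀ u v : A, D u v → Dg (φ u) (φ v)) (hsub : ∀ c, V c ⊆ U)
    (hcover : U ⊆ A ∪ ⋃ c, V c) (hdisj : Pairwise fun c c' => V c ∩ V c' ⊆ A) :
    HomExt D Dg U A φ ≃ ∀ c, HomExt D Dg (V c) A φ where
  toFun f c := f.restrict (hsub c)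
  invFun f := ⟨glueFun hcover f, glueFun_map_rel f hA hV hφ hdisj,
    fun _ hu => glueFun_of_mem_left f hu⟩
  left_inv f := by
    refine Subtype.ext (funext fun x => ?_)
    show glueFun hcover (fun c => f.restrict (hsub c)) x = f.1 x
    by_cases hx : (x : VH) ∈ A
    · exact (glueFun_of_mem_left _ hx).trans (f.2.2 x hx).symm
    · obtain ⟨c, hc⟩ := Set.mem_iUnion.1 ((hcover x.2).resolve_left hx)
      exact glueFun_of_mem _ hdisj hc
  right_inv f := funext fun c => Subtype.ext (funext fun x =>
    glueFun_of_mem (hcover := hcover) (x := ⟨x, hsub c x.2⟩) f hdisj x.2)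

end HomExt

theorem SimpleGraph.IsAcyclic.mem_support_of_isPath {T : SimpleGraph ι} (hT : T.IsAcyclic)
    {a b x : ι} {p : T.Walk a b} (hp : p.IsPath) (hx : x ∈ p.support) (w : T.Walk a b) :
    x ∈ w.support := by
  classical
  have hbp : w.bypass = p :=
    congrArg Subtype.val ((hT.subsingleton_path a b).elim ⟨_, w.bypass_isPath⟩ ⟨p, hp⟩)
  exact w.support_bypass_subset_support (hbp ▸ hx)

section InSubtree

open SimpleGraph Walk

variable {T : SimpleGraph ι} {r i j B c : ι}

theorem inSubtree_of_mem_support (hT : T.IsAcyclic) {p : T.Walk r j} (hp : p.IsPath)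
    (hi : i ∈ p.support) : InSubtree T r i j :=
  fun _ _ => hT.mem_support_of_isPath hp hi _

theorem InSubtree.trans (hBc : InSubtree T r B c) (hcj : InSubtree T r c j) :
    InSubtree T r B j := by
  classical
  intro p hp
  have hc : c ∈ p.support := hcj p hp
  exact support_takeUntil_subset_support p hc (hBc _ (hp.takeUntil hc))

theorem InSubtree.exists_adj (hT : T.IsTree) (hBj : InSubtree T r B j) (hne : j ≠ B) :
    ∃ c, T.Adj B c ∧ InSubtree T r B c ∧ InSubtree T r c j := by
  classical
  obtain ⟨p, hp⟩ := (hT.existsUnique_path r j).exists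
  have hB : B ∈ p.support := hBj p hp
  cases hq : p.dropUntil B hB with
  | nil => exact absurd rfl hne
  | @cons _ c _ hadj d =>
    have hsplit : p = ((p.takeUntil B hB).concat hadj).append d := by
      rw [concat_append, ← hq, take_spec]
    have hpre : ((p.takeUntil B hB).concat hadj).IsPath := (hsplit ▸ hp).of_append_left
    refine ⟨c, hadj, inSubtree_of_mem_support hT.isAcyclic hpre ?_,
      inSubtree_of_mem_support hT.isAcyclic hp ?_⟩
    · exact support_subset_support_concat _ _ (end_mem_support _)
    · exact support_dropUntil_subset_support p hB (by simp [hq])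

theorem InSubtree.exists_walk_not_mem_support (hT : T.IsTree) (hBc : InSubtree T r B c)
    (hcj : InSubtree T r c j) (hne : B ≠ c) : ∃ w : T.Walk c j, B ∉ w.support := by
  classical
  obtain ⟨p, hp⟩ := (hT.existsUnique_path r j).exists
  have hc : c ∈ p.support := hcj p hp
  have hB : B ∈ (p.takeUntil c hc).support := hBc _ (hp.takeUntil hc)
  refine ⟨p.dropUntil c hc, fun hB' => ?_⟩
  exact ((take_spec p hc).symm ▸ hp).ne_of_mem_support_of_append hne hB hB' rfl

theorem exists_isPath_through_of_children (hT : T.IsTree) {c' j' : ι}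
    (hadj : T.Adj B c) (hBc : InSubtree T r B c) (hadj' : T.Adj B c')
    (hBc' : InSubtree T r B c') (hcc' : c ≠ c') (hcj : InSubtree T r c j)
    (hc'j' : InSubtree T r c' j') :
    ∃ q : T.Walk j j', q.IsPath ∧ B ∈ q.support := by
  obtain ⟨w, hw⟩ := hBc.exists_walk_not_mem_support hT hcj hadj.ne
  obtain ⟨w', hw'⟩ := hBc'.exists_walk_not_mem_support hT hc'j' hadj'.ne
  obtain ⟨q, hq⟩ := (hT.existsUnique_path j j').exists
  refine ⟨q, hq, by_contra fun hBq => ?_⟩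
  -- `w`, `q`, `w'` would join `c` to `c'` avoiding `B`, but the tree path `c - B - c'` is forced.
  have hpath : (cons hadj.symm (cons hadj' nil) : T.Walk c c').IsPath := by
    simp [hadj.ne', hadj'.ne, hcc']
  have := hT.isAcyclic.mem_support_of_isPath hpath (x := B) (by simp)
    ((w.append q).append w'.reverse)
  simp only [mem_support_append_iff, support_reverse, List.mem_reverse] at this
  tauto

end InSubtree

theorem isForwardClosed_reachS (D : VH → VH → Prop) (A : Set VH) :
    IsForwardClosed D (ReachS D A) := by
  intro x y hx hxy
  obtain ⟨s, hs, hsx⟩ := Set.mem_iUnion₂.1 hx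
  exact Set.mem_iUnion₂.2 ⟨s, hs, hsx.tail hxy⟩

section HubTreeDecomp

variable {D : VH → VH → Prop} {S : Set VH} (𝒯 : HubTreeDecomp D S ι) {r B : ι}

theorem isForwardClosed_downReach : IsForwardClosed D (downReach D 𝒯 r B) := by
  intro x y hx hxy
  obtain ⟨j, hj, hxj⟩ := Set.mem_iUnion₂.1 hx
  exact Set.mem_iUnion₂.2 ⟨j, hj, isForwardClosed_reachS D _ hxj hxy⟩

theorem downReach_subset_of_inSubtree {c : ι} (hBc : InSubtree 𝒯.T r B c) :
    downReach D 𝒯 r c ⊆ downReach D 𝒯 r B :=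
  Set.biUnion_mono (fun _ hj => hBc.trans hj) fun _ _ => subset_rfl

theorem downReach_subset_reachS_union_children :
    downReach D 𝒯 r B ⊆ ReachS D (𝒯.bag B) ∪
      ⋃ c : {c : ι // 𝒯.T.Adj B c ∧ InSubtree 𝒯.T r B c}, downReach D 𝒯 r c := by
  intro x hx
  obtain ⟨j, hj, hxj⟩ := Set.mem_iUnion₂.1 hx
  by_cases hjB : j = B
  · exact Or.inl (hjB ▸ hxj)
  · obtain ⟨c, hadj, hBc, hcj⟩ := InSubtree.exists_adj 𝒯.tree hj hjB
    exact Or.inr (Set.mem_iUnion.2 ⟨⟨c, hadj, hBc⟩, Set.mem_iUnion₂.2 ⟨j, hcj, hxj⟩⟩)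

theorem downReach_inter_subset_reachS_of_children
    {c c' : {c : ι // 𝒯.T.Adj B c ∧ InSubtree 𝒯.T r B c}} (hcc' : c ≠ c') :
    downReach D 𝒯 r c ∩ downReach D 𝒯 r c' ⊆ ReachS D (𝒯.bag B) := by
  rintro x ⟨hx, hx'⟩
  obtain ⟨j, hj, hxj⟩ := Set.mem_iUnion₂.1 hx
  obtain ⟨j', hj', hxj'⟩ := Set.mem_iUnion₂.1 hx'
  obtain ⟨q, hq, hBq⟩ := exists_isPath_through_of_children 𝒯.tree c.2.1 c.2.2 c'.2.1 c'.2.2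
    (Subtype.coe_ne_coe.2 hcc') hj hj'
  exact 𝒯.decomp B j j' q hq hBq ⟨hxj, hxj'⟩

end HubTreeDecomp

theorem stmt16_general [Finite ι]
    (D : VH → VH → Prop) (Dg : VG → VG → Prop) (S : Set VH)
    (𝒯 : HubTreeDecomp D S ι) (r B : ι)
    (φB : ↥(ReachS D (𝒯.bag B)) → VG)
    (hφB : ∀ u v : ↥(ReachS D (𝒯.bag B)), D (u : VH) (v : VH) → Dg (φB u) (φB v)) :
    Nonempty
      (HomExt D Dg (downReach D 𝒯 r B) (ReachS D (𝒯.bag B)) φB ≃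
        ∀ c : {c : ι // 𝒯.T.Adj B c ∧ InSubtree 𝒯.T r B c},
          HomExt D Dg (downReach D 𝒯 r (c : ι)) (ReachS D (𝒯.bag B)) φB) ∧
    Nat.card (HomExt D Dg (downReach D 𝒯 r B) (ReachS D (𝒯.bag B)) φB) =
      ∏ᶠ c : {c : ι // 𝒯.T.Adj B c ∧ InSubtree 𝒯.T r B c},
        Nat.card (HomExt D Dg (downReach D 𝒯 r (c : ι)) (ReachS D (𝒯.bag B)) φB) := by
  let e := HomExt.equivPi (V := fun c : {c : ι // 𝒯.T.Adj B c ∧ InSubtree 𝒯.T r B c} =>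
      downReach D 𝒯 r c) (isForwardClosed_reachS D _) (fun _ => isForwardClosed_downReach 𝒯)
    hφB (fun c => downReach_subset_of_inSubtree 𝒯 c.2.2)
    (downReach_subset_reachS_union_children 𝒯)
    (fun _ _ => downReach_inter_subset_reachS_of_children 𝒯)
  refine ⟨⟨e⟩, ?_⟩
  have := Fintype.ofFinite {c : ι // 𝒯.T.Adj B c ∧ InSubtree 𝒯.T r B c}
  rw [Nat.card_congr e, Nat.card_pi, finprod_eq_prod_of_fintype]

/-- let `T` be a hub-tree decomposition (rooted at `r`) of `D`, `B` a node,
and `φB` a homomorphism from `H⃗(B)` to `Dg`.  The homomorphisms from `H⃗(down(B))` to `Dg`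
respecting `φB` are in bijection with the product, over the children `c` of `B`, of the
homomorphisms from `H⃗(down(c))` to `Dg` respecting `φB`; consequently the corresponding
counts `ext` multiply. -/
theorem stmt16 [Finite VH] [Finite VG] [Finite ι]
    (D : VH → VH → Prop) (Dg : VG → VG → Prop) (S : Set VH) (hS : IsHubset D S)
    (𝒯 : HubTreeDecomp D S ι) (r B : ι)
    (φB : ↥(ReachS D (𝒯.bag B)) → VG)
    (hφB : ∀ u v : ↥(ReachS D (𝒯.bag B)), D (u : VH) (v : VH) → Dg (φB u) (φB v)) :
    Nonempty
      (HomExt D Dg (downReach D 𝒯 r B) (ReachS D (𝒯.bag B)) φB ≃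
        ∀ c : {c : ι // 𝒯.T.Adj B c ∧ InSubtree 𝒯.T r B c},
          HomExt D Dg (downReach D 𝒯 r (c : ι)) (ReachS D (𝒯.bag B)) φB) ∧
    Nat.card (HomExt D Dg (downReach D 𝒯 r B) (ReachS D (𝒯.bag B)) φB) =
      ∏ᶠ c : {c : ι // 𝒯.T.Adj B c ∧ InSubtree 𝒯.T r B c},
        Nat.card (HomExt D Dg (downReach D 𝒯 r (c : ι)) (ReachS D (𝒯.bag B)) φB) :=
  stmt16_general D Dg S 𝒯 r B φB hφB
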